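/- arXiv:1702.06190 — 2 statements merged into one kernel-verified Lean document; each statement's English description precedes it below -/
import Mathlib

section
/- Let m ∈ ℕ, F ∈ C(m) and n ∈ ℕ with n ≥ 1. Then K_n^ε(F) converges to K_n(F) in the Hausdorff metric as ε → 0⁺: for every δ > 0 there exists ε₀ > 0 such that d_H(K_n^ε(F), K_n(F)) < δ for all ε ∈ (0, ε₀]. -/
open Metric Set Pointwise

noncomputable section

abbrev E (m : ℕ) := EuclideanSpace ℝ (Fin m)

def cube (m : ℕ) : Set (E m) := {x | ∀ i, x i ∈ Set.Icc (0:ℝ) 1}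

def intVec {m : ℕ} (t : Fin m → ℤ) : E m := WithLp.toLp 2 (fun i => (t i : ℝ))

def IsLift {m : ℕ} (F : E m → E m) : Prop :=
  Continuous F ∧ ∀ (x : E m) (t : Fin m → ℤ), F (x + intVec t) = F x + intVec t

def IsHomeoLift {m : ℕ} (F : E m → E m) : Prop :=
  IsLift F ∧ ∃ h : (E m) ≃ₜ (E m), ⇑h = F

def Kset {m : ℕ} (F : E m → E m) (k : ℕ) : Set (E m) :=
  {v | ∃ x ∈ cube m, v = (k : ℝ)⁻¹ • (F^[k] x - x)}

def rotSet {m : ℕ} (F : E m → E m) : Set (E m) :=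
  ⋂ n ≥ 1, closure (⋃ k ≥ n, Kset F k)

def IsPseudoOrbit {m : ℕ} (F : E m → E m) (ε : ℝ) (n : ℕ) (ξ : ℕ → E m) : Prop :=
  ∀ j < n, ‖F (ξ j) - ξ (j + 1)‖ ≤ ε

def KsetEps {m : ℕ} (F : E m → E m) (ε : ℝ) (k : ℕ) : Set (E m) :=
  {v | ∃ ξ : ℕ → E m, IsPseudoOrbit F ε k ξ ∧ ξ 0 ∈ cube m ∧ v = (k : ℝ)⁻¹ • (ξ k - ξ 0)}

def rotSetEps {m : ℕ} (F : E m → E m) (ε : ℝ) : Set (E m) :=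
  ⋂ n ≥ 1, closure (⋃ k ≥ n, KsetEps F ε k)

/-! An ε-pseudo-orbit of length `n` starting in a compact set `C` stays close to the true orbit of
its initial point when `ε` is small: by induction on `n`, if `ξ n` is close to
`F^[n] (ξ 0) ∈ F^[n] '' C`, uniform continuity of `F` near this compact set keeps `F (ξ n)` close
to `F^[n+1] (ξ 0)`, and `ξ (n+1)` is within `ε` of `F (ξ n)`. Since true orbits are pseudo-orbits,
`K_n(F) ⊆ K_n^ε(F)`, and the two sets are then Hausdorff-close. -/

theorem IsCompact.exists_forall_dist_lt_of_continuous {X Y : Type*} [PseudoMetricSpace X]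
    [PseudoMetricSpace Y] {s : Set X} (hs : IsCompact s) {f : X → Y} (hf : Continuous f)
    {η : ℝ} (hη : 0 < η) :
    ∃ δ > 0, ∀ x ∈ s, ∀ y, dist x y < δ → dist (f x) (f y) < η := by
  obtain ⟨δ, hδ, h⟩ := mem_uniformity_dist.1 <|
    hs.uniformContinuousAt_of_continuousAt f (fun a _ => hf.continuousAt) (dist_mem_uniformity hη)
  exact ⟨δ, hδ, fun x hx y hxy => h hxy hx⟩

theorem Continuous.exists_forall_dist_iterate_lt {X : Type*} [PseudoMetricSpace X]
    {F : X → X} (hF : Continuous F) {C : Set X} (hC : IsCompact C) (n : ℕ) :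
    ∀ η > 0, ∃ ε > 0, ∀ ξ : ℕ → X, ξ 0 ∈ C → (∀ j < n, dist (F (ξ j)) (ξ (j + 1)) ≤ ε) →
      dist (ξ n) (F^[n] (ξ 0)) < η := by
  induction n with
  | zero => exact fun η hη => ⟨1, one_pos, fun ξ _ _ => by simpa using hη⟩
  | succ n ih =>
    intro η hη
    obtain ⟨δ, hδ, hF_near⟩ :=
      (hC.image (hF.iterate n)).exists_forall_dist_lt_of_continuous hF (half_pos hη)
    obtain ⟨ε, hε, hshadow⟩ := ih δ hδ
    refine ⟨min ε (η / 2), by positivity, fun ξ hξ0 hξ => ?_⟩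
    have hclose : dist (ξ n) (F^[n] (ξ 0)) < δ :=
      hshadow ξ hξ0 fun j hj => (hξ j (by omega)).trans (min_le_left _ _)
    have hstep : dist (F (ξ n)) (ξ (n + 1)) ≤ η / 2 :=
      (hξ n n.lt_succ_self).trans (min_le_right _ _)
    have hF_step : dist (F^[n + 1] (ξ 0)) (F (ξ n)) < η / 2 := by
      rw [Function.iterate_succ_apply']
      exact hF_near _ (mem_image_of_mem _ hξ0) _ (by rwa [dist_comm])
    calc dist (ξ (n + 1)) (F^[n + 1] (ξ 0))
        ≤ dist (F^[n + 1] (ξ 0)) (F (ξ n)) + dist (F (ξ n)) (ξ (n + 1)) := by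
          rw [dist_comm]; exact dist_triangle _ _ _
      _ < η / 2 + η / 2 := add_lt_add_of_lt_of_le hF_step hstep
      _ = η := add_halves η

theorem dist_inv_natCast_smul_sub_le {V : Type*} [NormedAddCommGroup V] [NormedSpace ℝ V]
    (k : ℕ) (a b c : V) : dist ((k : ℝ)⁻¹ • (a - c)) ((k : ℝ)⁻¹ • (b - c)) ≤ dist a b := by
  rw [dist_smul₀, dist_sub_right, Real.norm_eq_abs, abs_inv, Nat.abs_cast]
  exact mul_le_of_le_one_left dist_nonneg (Nat.cast_inv_le_one k)

theorem isCompact_cube (m : ℕ) : IsCompact (cube m) := by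
  have h : cube m = WithLp.toLp 2 '' Set.pi univ (fun _ : Fin m => Icc (0 : ℝ) 1) := by
    ext x
    exact ⟨fun hx => ⟨WithLp.ofLp x, mem_univ_pi.2 hx, rfl⟩,
      by rintro ⟨y, hy, rfl⟩; exact mem_univ_pi.1 hy⟩
  rw [h]
  exact (isCompact_univ_pi fun _ => isCompact_Icc).image (PiLp.continuous_toLp 2 _)

theorem Kset_subset_KsetEps {m : ℕ} (F : E m → E m) {ε : ℝ} (hε : 0 ≤ ε) (k : ℕ) :
    Kset F k ⊆ KsetEps F ε k := by
  rintro _ ⟨x, hx, rfl⟩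
  refine ⟨fun j => F^[j] x, fun j _ => ?_, hx, rfl⟩
  simpa only [Function.iterate_succ_apply', sub_self, norm_zero] using hε

theorem KsetEps_tendsto_Kset_general {m : ℕ} {F : E m → E m} (hF : IsLift F)
    {n : ℕ} :
    ∀ δ > (0 : ℝ), ∃ ε₀ > (0 : ℝ), ∀ ε : ℝ, 0 < ε → ε ≤ ε₀ →
      Metric.hausdorffDist (KsetEps F ε n) (Kset F n) < δ := by
  intro δ hδ
  obtain ⟨ε₀, hε₀, hshadow⟩ := 
    hF.1.exists_forall_dist_iterate_lt (isCompact_cube m) n _ (half_pos hδ)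
  refine ⟨ε₀, hε₀, fun ε hε hεε₀ => ?_⟩
  refine lt_of_le_of_lt (hausdorffDist_le_of_mem_dist (half_pos hδ).le ?_ ?_) (half_lt_self hδ)
  · rintro _ ⟨ξ, hξ, hξ0, rfl⟩
    refine ⟨_, ⟨ξ 0, hξ0, rfl⟩, (dist_inv_natCast_smul_sub_le n _ _ _).trans ?_⟩
    refine (hshadow ξ hξ0 fun j hj => ?_).le
    rw [dist_eq_norm]
    exact (hξ j hj).trans hεε₀
  · exact fun w hw => ⟨w, Kset_subset_KsetEps F hε.le n hw, by rw [dist_self]; positivity⟩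

/-- `K_n^ε(F)` converges to `K_n(F)` in the Hausdorff metric as ε → 0⁺. -/
theorem KsetEps_tendsto_Kset {m : ℕ} {F : E m → E m} (hF : IsLift F)
    {n : ℕ} (hn : 1 ≤ n) :
    ∀ δ > (0 : ℝ), ∃ ε₀ > (0 : ℝ), ∀ ε : ℝ, 0 < ε → ε ≤ ε₀ →
      Metric.hausdorffDist (KsetEps F ε n) (Kset F n) < δ :=
  KsetEps_tendsto_Kset_general hF
end
end

section
/- Suppose F ∈ H(2) is Lipschitz continuous with Lipschitz constant L > 1, ε > 0, the algorithm data satisfy Lη ≤ R ≤ ε, F satisfies the bounded deviation property with constant c > 0, and there is δ ∈ (0, 1/2) such that every finite 2ε-pseudo-orbit (ξ_j)_{j=0}^n of F is δ-shadowed by an orbit of F (i.e. there exists x ∈ ℝ² with ‖F^j(x) − ξ_j‖ < δ for all 0 ≤ j ≤ n). Then for every n ∈ ℕ with n ≥ 1, d_H(Q_n*, ρ(F)) ≤ (√2 + 1 + c)/n. -/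
open Metric Set Pointwise

noncomputable section

def boxes (B0 : Set (Set (E 2))) : Set (Set (E 2)) :=
  {B' | ∃ B ∈ B0, ∃ t : Fin 2 → ℤ, B' = (fun x => x + intVec t) '' B}

structure AlgoData (ε η R : ℝ) (F : E 2 → E 2) where
  B0 : Set (Set (E 2))
  compact' : ∀ B ∈ B0, IsCompact B
  subCube : ∀ B ∈ B0, B ⊆ cube 2
  small : ∀ B ∈ B0, Metric.diam B ≤ ε
  cover : ⋃₀ B0 = cube 2
  Γ : Set (E 2) → Set (E 2)
  Γ_sub : ∀ B ∈ boxes B0, Γ B ⊆ B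
  Γ_fin : ∀ B ∈ boxes B0, (Γ B).Finite
  Γ_dense : ∀ B ∈ boxes B0, ∀ x ∈ B, ∃ y ∈ Γ B, dist x y ≤ η
  Γ_equiv : ∀ B ∈ boxes B0, ∀ t : Fin 2 → ℤ,
    Γ ((fun x => x + intVec t) '' B) = (fun x => x + intVec t) '' Γ B

variable {ε η R : ℝ} {F : E 2 → E 2}

def boxImage (D : AlgoData ε η R F) (B : Set (E 2)) : Set (Set (E 2)) :=
  {B' | B' ∈ boxes D.B0 ∧ ∃ x ∈ D.Γ B, Metric.infDist (F x) B' ≤ R}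

def boxCol (D : AlgoData ε η R F) : ℕ → Set (Set (E 2))
  | 0 => D.B0
  | k + 1 => {B' | ∃ B ∈ boxCol D k, B' ∈ boxImage D B}

def Qset (D : AlgoData ε η R F) : ℕ → Set (E 2)
  | 0 => cube 2
  | k + 1 => ⋃ B ∈ boxCol D (k + 1), B

def QsetStar (D : AlgoData ε η R F) (n : ℕ) : Set (E 2) :=
  (n : ℝ)⁻¹ • Qset D n

/-!
A point of `Q_n` is the endpoint of a chain of boxes, and choosing one point in each box gives a
`2ε`-pseudo-orbit of length `n` starting in `[0,1]²`, because each step of a box image moves by at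
most `R + ε ≤ 2ε`. Its shadowing orbit `x` has displacement `F^n x - x` within `2δ + √2 < √2 + 1`
of the endpoint. Conversely, since `Lη ≤ R`, every orbit starting in `[0,1]²` is followed by the
box collections, so `F^n x ∈ Q_n` and `F^n x - x` is within `√2` of `Q_n`. After scaling by `1/n`
this gives `d_H(Q_n*, K_n) ≤ (√2 + 1)/n`, and bounded deviation adds `c/n`.
-/

theorem Metric.hausdorffDist_le_add_of_mem_dist {α : Type*} [PseudoMetricSpace α]
    {s t u : Set α} {a b : ℝ} (ha : 0 ≤ a) (H1 : ∀ x ∈ s, ∃ y ∈ t, dist x y ≤ a)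
    (H2 : ∀ x ∈ t, ∃ y ∈ s, dist x y ≤ a) (htu : hausdorffDist t u ≤ b) :
    hausdorffDist s u ≤ a + b := by
  have hedist {x y : α} : dist x y ≤ a → edist x y ≤ ENNReal.ofReal a := (edist_le_ofReal ha).2
  have fin : hausdorffEDist s t ≠ ⊤ :=
    ne_top_of_le_ne_top ENNReal.ofReal_ne_top <| hausdorffEDist_le_of_mem_edist
      (fun x hx => (H1 x hx).imp fun _ ⟨hy, h⟩ => ⟨hy, hedist h⟩)
      (fun x hx => (H2 x hx).imp fun _ ⟨hy, h⟩ => ⟨hy, hedist h⟩)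
  calc hausdorffDist s u ≤ hausdorffDist s t + hausdorffDist t u := hausdorffDist_triangle fin
    _ ≤ a + b := add_le_add (hausdorffDist_le_of_mem_dist ha H1 H2) htu

theorem dist_inv_natCast_smul_le {V : Type*} [NormedAddCommGroup V] [NormedSpace ℝ V]
    {p q : V} {a : ℝ} (h : ‖p - q‖ ≤ a) (n : ℕ) :
    dist ((n : ℝ)⁻¹ • p) ((n : ℝ)⁻¹ • q) ≤ a / n := by
  rw [dist_smul₀, dist_eq_norm, norm_inv, Real.norm_natCast, div_eq_inv_mul]
  gcongr

section Lift

variable {m : ℕ} {F : E m → E m}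

theorem intVec_zero : intVec (0 : Fin m → ℤ) = 0 := by
  ext i
  simp [intVec]

theorem norm_le_sqrt_of_mem_cube {x : E m} (hx : x ∈ cube m) : ‖x‖ ≤ √m := by
  rw [EuclideanSpace.norm_eq]
  gcongr
  calc ∑ i, ‖x i‖ ^ 2 ≤ ∑ _i : Fin m, (1 : ℝ) := by
        gcongr with i
        rw [Real.norm_eq_abs, sq_abs]
        nlinarith [(hx i).1, (hx i).2]
    _ = m := by simp

theorem exists_add_intVec_mem_cube (z : E m) : ∃ t : Fin m → ℤ, z + intVec t ∈ cube m :=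
  ⟨fun i => -⌊z i⌋, fun i => by
    simp only [PiLp.add_apply, intVec, Int.cast_neg]
    constructor <;> linarith [Int.floor_le (z i), Int.lt_floor_add_one (z i)]⟩

theorem IsLift.iterate_add_intVec (hF : IsLift F) (k : ℕ) (x : E m) (t : Fin m → ℤ) :
    F^[k] (x + intVec t) = F^[k] x + intVec t := by
  induction k with
  | zero => rfl
  | succ k ih => rw [Function.iterate_succ_apply', ih, hF.2, Function.iterate_succ_apply']

theorem IsLift.inv_smul_iterate_sub_mem_Kset (hF : IsLift F) (k : ℕ) (x : E m) :
    (k : ℝ)⁻¹ • (F^[k] x - x) ∈ Kset F k := by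
  obtain ⟨t, ht⟩ := exists_add_intVec_mem_cube x
  refine ⟨x + intVec t, ht, ?_⟩
  rw [hF.iterate_add_intVec, add_sub_add_right_eq_sub]

theorem IsPseudoOrbit.update_succ {δ : ℝ} {k : ℕ} {ξ : ℕ → E m}
    (hξ : IsPseudoOrbit F δ k ξ) {y : E m} (hy : ‖F (ξ k) - y‖ ≤ δ) :
    IsPseudoOrbit F δ (k + 1) (Function.update ξ (k + 1) y) := by
  intro j hj
  rw [Function.update_of_ne (by omega)]
  rcases Nat.lt_succ_iff_lt_or_eq.1 hj with hj | rfl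
  · rw [Function.update_of_ne (by omega)]
    exact hξ j hj
  · rwa [Function.update_self]

end Lift

section Boxes

variable (D : AlgoData ε η R F)

theorem AlgoData.B0_subset_boxes : D.B0 ⊆ boxes D.B0 := fun B hB =>
  ⟨B, hB, 0, by simp [intVec_zero]⟩

theorem AlgoData.boxCol_subset_boxes : ∀ k, boxCol D k ⊆ boxes D.B0
  | 0 => D.B0_subset_boxes
  | _ + 1 => fun _ ⟨_, _, hB', _⟩ => hB'

theorem AlgoData.isBounded_of_mem_boxes {B : Set (E 2)} (hB : B ∈ boxes D.B0) :
    Bornology.IsBounded B := by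
  obtain ⟨B₀, hB₀, t, rfl⟩ := hB
  exact ((D.compact' B₀ hB₀).image (continuous_add_const _)).isBounded

theorem AlgoData.diam_le_of_mem_boxes {B : Set (E 2)} (hB : B ∈ boxes D.B0) : diam B ≤ ε := by
  obtain ⟨B₀, hB₀, t, rfl⟩ := hB
  rw [(isometry_add_right (intVec t)).diam_image]
  exact D.small B₀ hB₀

theorem AlgoData.exists_mem_boxes (z : E 2) : ∃ B ∈ boxes D.B0, z ∈ B := by
  obtain ⟨t, ht⟩ := exists_add_intVec_mem_cube z
  obtain ⟨B₀, hB₀, hz⟩ : z + intVec t ∈ ⋃₀ D.B0 := D.cover ▸ ht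
  refine ⟨_, ⟨B₀, hB₀, -t, rfl⟩, z + intVec t, hz, ?_⟩
  ext i
  simp [intVec]

theorem AlgoData.mem_Qset_iff {k : ℕ} {y : E 2} : y ∈ Qset D k ↔ ∃ B ∈ boxCol D k, y ∈ B := by
  cases k with
  | zero => simp only [Qset, boxCol, ← D.cover, mem_sUnion]
  | succ k => simp only [Qset, mem_iUnion₂, exists_prop]

theorem AlgoData.exists_pseudoOrbit_of_mem_Qset (hRε : R ≤ ε) :
    ∀ k, ∀ y ∈ Qset D k,
      ∃ ξ : ℕ → E 2, ξ 0 ∈ cube 2 ∧ IsPseudoOrbit F (2 * ε) k ξ ∧ ξ k = y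
  | 0, y, hy => ⟨fun _ => y, hy, fun _ hj => absurd hj (Nat.not_lt_zero _), rfl⟩
  | k + 1, y, hy => by
    obtain ⟨B', ⟨B, hB, hB', x, hxΓ, hxB'⟩, hyB'⟩ := D.mem_Qset_iff.1 hy
    have hxQ : x ∈ Qset D k :=
      D.mem_Qset_iff.2 ⟨B, hB, D.Γ_sub B (D.boxCol_subset_boxes k hB) hxΓ⟩
    obtain ⟨ξ, hξ0, hξ, rfl⟩ := AlgoData.exists_pseudoOrbit_of_mem_Qset hRε k x hxQ
    have hstep : ‖F (ξ k) - y‖ ≤ 2 * ε := by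
      rw [← dist_eq_norm]
      linarith [dist_le_infDist_add_diam (x := F (ξ k)) (D.isBounded_of_mem_boxes hB') hyB',
        D.diam_le_of_mem_boxes hB']
    exact ⟨_, by rwa [Function.update_of_ne (by omega)], hξ.update_succ hstep,
      Function.update_self ..⟩

theorem AlgoData.iterate_mem_Qset {L : NNReal} (hL : LipschitzWith L F) (hLη : (L : ℝ) * η ≤ R)
    {x : E 2} (hx : x ∈ cube 2) : ∀ k, F^[k] x ∈ Qset D k
  | 0 => hx
  | k + 1 => by
    obtain ⟨B, hB, hxB⟩ := D.mem_Qset_iff.1 (AlgoData.iterate_mem_Qset hL hLη hx k)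
    obtain ⟨γ, hγ, hγx⟩ := D.Γ_dense B (D.boxCol_subset_boxes k hB) _ hxB
    obtain ⟨B', hB', hxB'⟩ := D.exists_mem_boxes (F^[k + 1] x)
    refine D.mem_Qset_iff.2 ⟨B', ⟨B, hB, hB', γ, hγ, ?_⟩, hxB'⟩
    calc infDist (F γ) B' ≤ dist (F γ) (F (F^[k] x)) := by
          rw [← Function.iterate_succ_apply' F k x]
          exact infDist_le_dist_of_mem hxB'
      _ ≤ L * dist γ (F^[k] x) := hL.dist_le_mul _ _
      _ ≤ L * η := by rw [dist_comm]; gcongr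
      _ ≤ R := hLη

theorem AlgoData.exists_mem_Kset_dist_le_of_mem_QsetStar (hF : IsLift F) (hRε : R ≤ ε)
    {δ : ℝ} (hδ : δ ≤ 1 / 2)
    (hshadow : ∀ (n : ℕ) (ξ : ℕ → E 2), IsPseudoOrbit F (2 * ε) n ξ →
      ∃ x : E 2, ∀ j ≤ n, ‖F^[j] x - ξ j‖ < δ)
    (n : ℕ) : ∀ v ∈ QsetStar D n, ∃ w ∈ Kset F n, dist v w ≤ (√2 + 1) / n := by
  rintro _ ⟨y, hy, rfl⟩
  obtain ⟨ξ, hξ0, hξ, rfl⟩ := D.exists_pseudoOrbit_of_mem_Qset hRε n y hy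
  obtain ⟨x, hx⟩ := hshadow n ξ hξ
  refine ⟨_, hF.inv_smul_iterate_sub_mem_Kset n x, dist_inv_natCast_smul_le ?_ n⟩
  have hn := hx n le_rfl
  have h0 : ‖x - ξ 0‖ < δ := hx 0 n.zero_le
  calc ‖ξ n - (F^[n] x - x)‖ = ‖-(F^[n] x - ξ n) + (x - ξ 0) + ξ 0‖ := by congr 1; abel
    _ ≤ ‖F^[n] x - ξ n‖ + ‖x - ξ 0‖ + ‖ξ 0‖ := by
        simpa only [norm_neg] using norm_add₃_le (a := -(F^[n] x - ξ n))
    _ ≤ δ + δ + √2 := by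
        gcongr
        exact_mod_cast norm_le_sqrt_of_mem_cube hξ0
    _ ≤ √2 + 1 := by linarith

theorem AlgoData.exists_mem_QsetStar_dist_le_of_mem_Kset {L : NNReal} (hL : LipschitzWith L F)
    (hLη : (L : ℝ) * η ≤ R) (n : ℕ) : ∀ v ∈ Kset F n, ∃ w ∈ QsetStar D n, dist v w ≤ √2 / n := by
  rintro _ ⟨x, hx, rfl⟩
  refine ⟨_, smul_mem_smul_set (D.iterate_mem_Qset hL hLη hx n), dist_inv_natCast_smul_le ?_ n⟩
  rw [sub_sub_cancel_left, norm_neg]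
  exact_mod_cast norm_le_sqrt_of_mem_cube hx

end Boxes

theorem hausdorffDist_QsetStar_rotSet_shadowing_general {F : E 2 → E 2} (hF : IsHomeoLift F)
    {L : NNReal} (hL : LipschitzWith L F)
    {ε η R : ℝ}
    (hLη : (L : ℝ) * η ≤ R) (hRε : R ≤ ε)
    (D : AlgoData ε η R F)
    {c : ℝ}
    (hBD : ∀ n : ℕ, 1 ≤ n → Metric.hausdorffDist (Kset F n) (rotSet F) ≤ c / n)
    {δ : ℝ} (hδ : δ ∈ Set.Ioo (0 : ℝ) (1 / 2))
    (hshadow : ∀ (n : ℕ) (ξ : ℕ → E 2), IsPseudoOrbit F (2 * ε) n ξ →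
      ∃ x : E 2, ∀ j ≤ n, ‖F^[j] x - ξ j‖ < δ)
    {n : ℕ} (hn : 1 ≤ n) :
    Metric.hausdorffDist (QsetStar D n) (rotSet F) ≤
      (Real.sqrt 2 + 1 + c) / n := by
  have hKQ : ∀ v ∈ Kset F n, ∃ w ∈ QsetStar D n, dist v w ≤ (√2 + 1) / n := fun v hv =>
    (D.exists_mem_QsetStar_dist_le_of_mem_Kset hL hLη n v hv).imp fun _ ⟨hw, h⟩ =>
      ⟨hw, h.trans (by gcongr; linarith)⟩
  rw [add_div]
  exact hausdorffDist_le_add_of_mem_dist (by positivity)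
    (D.exists_mem_Kset_dist_le_of_mem_QsetStar hF.1 hRε hδ.2.le hshadow n) hKQ (hBD n hn)

/-- Improved error estimate under shadowing: `d_H(Q_n*, ρ(F)) ≤ (√2 + 1 + c)/n`. -/
theorem hausdorffDist_QsetStar_rotSet_shadowing {F : E 2 → E 2} (hF : IsHomeoLift F)
    {L : NNReal} (hL : LipschitzWith L F) (hL1 : 1 < L)
    {ε η R : ℝ} (hε : 0 < ε) (hη : 0 < η) (hR : 0 < R)
    (hLη : (L : ℝ) * η ≤ R) (hRε : R ≤ ε)
    (D : AlgoData ε η R F)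
    {c : ℝ} (hc : 0 < c)
    (hBD : ∀ n : ℕ, 1 ≤ n → Metric.hausdorffDist (Kset F n) (rotSet F) ≤ c / n)
    {δ : ℝ} (hδ : δ ∈ Set.Ioo (0 : ℝ) (1 / 2))
    (hshadow : ∀ (n : ℕ) (ξ : ℕ → E 2), IsPseudoOrbit F (2 * ε) n ξ →
      ∃ x : E 2, ∀ j ≤ n, ‖F^[j] x - ξ j‖ < δ)
    {n : ℕ} (hn : 1 ≤ n) :
    Metric.hausdorffDist (QsetStar D n) (rotSet F) ≤
      (Real.sqrt 2 + 1 + c) / n :=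
  hausdorffDist_QsetStar_rotSet_shadowing_general hF hL hLη hRε D hBD hδ hshadow hn
end
end
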